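/- With the L-estimator μ̂_{j:m} as above computed from a fixed sample, one has μ̂_{j:m+1} ≤ μ̂_{j:m} for all 1 ≤ j ≤ m. -/

import Mathlib

/-!
For `1 ≤ j ≤ m` the difference of Beta CDFs has the closed form
`F_{j:m+1}(t) - F_{j:m}(t) = C(m, j-1) tʲ (1-t)^(m-j+1)` (differentiate both sides), so it is
nonnegative on `[0, 1]` and vanishes at both endpoints. Summation by parts turns
`μ̂_{j:m} - μ̂_{j:m+1}` into `∑ (x_{i+1} - x_i) d_{i+1}` with `d_k = (F_{j:m+1} - F_{j:m})(k/n) ≥ 0`,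
which is nonnegative because the sample is sorted.
-/

open MeasureTheory Set

/-- Density of the Beta(j, m-j+1) distribution. -/
noncomputable def betaPDF (j m : ℕ) (p : ℝ) : ℝ :=
  (m.factorial : ℝ) / ((j - 1).factorial * (m - j).factorial) * p ^ (j - 1) * (1 - p) ^ (m - j)

/-- CDF of the Beta(j, m-j+1) distribution. -/
noncomputable def betaCDF (j m : ℕ) (t : ℝ) : ℝ := ∫ p in (0:ℝ)..t, betaPDF j m p


/-- The L-estimator computed from a sorted sample. -/
noncomputable def Lest (n : ℕ) (x : Fin n → ℝ) (j m : ℕ) : ℝ :=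
  ∑ i : Fin n, x i * (betaCDF j m (((i : ℕ) + 1) / n) - betaCDF j m ((i : ℕ) / n))

lemma betaPDF_continuous (j m : ℕ) : Continuous (betaPDF j m) := by
  unfold betaPDF; fun_prop

lemma hasDerivAt_betaPDF_succ_sub_betaPDF (a b : ℕ) (p : ℝ) :
    HasDerivAt (fun t : ℝ => ((a + b + 1).choose a : ℝ) * t ^ (a + 1) * (1 - t) ^ (b + 1))
      (betaPDF (a + 1) (a + b + 1 + 1) p - betaPDF (a + 1) (a + b + 1) p) p := by
  have hpow : HasDerivAt (fun t : ℝ => t ^ (a + 1)) ((a + 1) * p ^ a) p := by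
    simpa using hasDerivAt_pow (a + 1) p
  have hpow' : HasDerivAt (fun t : ℝ => (1 - t) ^ (b + 1)) (-((b + 1) * (1 - p) ^ b)) p := by
    simpa [Function.comp_def] using
      (hasDerivAt_pow (b + 1) (1 - p)).comp p ((hasDerivAt_id p).const_sub 1)
  refine ((hpow.const_mul ((a + b + 1).choose a : ℝ)).fun_mul hpow').congr_deriv ?_
  have e1 : a + b + 1 + 1 - (a + 1) = b + 1 := by omega
  have e2 : a + b + 1 - (a + 1) = b := by omega
  have e3 : a + b + 1 - a = b + 1 := by omega
  simp only [betaPDF, Nat.add_sub_cancel, e1, e2, Nat.cast_choose ℝ (by omega : a ≤ a + b + 1), e3,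
    Nat.factorial_succ (a + b + 1), Nat.factorial_succ b]
  push_cast
  field_simp
  ring

theorem betaCDF_succ_sub_betaCDF_eq (a b : ℕ) (t : ℝ) :
    betaCDF (a + 1) (a + b + 1 + 1) t - betaCDF (a + 1) (a + b + 1) t
      = (a + b + 1).choose a * t ^ (a + 1) * (1 - t) ^ (b + 1) := by
  have hint (j m : ℕ) : IntervalIntegrable (betaPDF j m) volume 0 t :=
    (betaPDF_continuous j m).intervalIntegrable _ _
  rw [betaCDF, betaCDF, ← intervalIntegral.integral_sub (hint _ _) (hint _ _),
    intervalIntegral.integral_eq_sub_of_hasDerivAt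
      (fun p _ => hasDerivAt_betaPDF_succ_sub_betaPDF a b p)
      (((betaPDF_continuous _ _).sub (betaPDF_continuous _ _)).intervalIntegrable _ _)]
  simp

theorem betaCDF_succ_sub_betaCDF {j m : ℕ} (hj : 1 ≤ j) (hjm : j ≤ m) (t : ℝ) :
    betaCDF j (m + 1) t - betaCDF j m t = m.choose (j - 1) * t ^ j * (1 - t) ^ (m + 1 - j) := by
  obtain ⟨a, rfl⟩ : ∃ a, j = a + 1 := ⟨j - 1, by omega⟩
  obtain ⟨b, rfl⟩ : ∃ b, m = a + b + 1 := ⟨m - (a + 1), by omega⟩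
  rw [betaCDF_succ_sub_betaCDF_eq, Nat.add_sub_cancel, show a + b + 1 + 1 - (a + 1) = b + 1 by omega]

theorem betaCDF_le_betaCDF_succ {j m : ℕ} (hj : 1 ≤ j) (hjm : j ≤ m) {t : ℝ}
    (ht : t ∈ Icc (0 : ℝ) 1) : betaCDF j m t ≤ betaCDF j (m + 1) t := by
  obtain ⟨ht0, ht1⟩ := ht
  have h1t : 0 ≤ 1 - t := sub_nonneg.2 ht1
  rw [← sub_nonneg, betaCDF_succ_sub_betaCDF hj hjm]
  positivity

theorem betaCDF_succ_one {j m : ℕ} (hj : 1 ≤ j) (hjm : j ≤ m) :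
    betaCDF j (m + 1) 1 = betaCDF j m 1 := by
  rw [← sub_eq_zero, betaCDF_succ_sub_betaCDF hj hjm, sub_self, zero_pow (by omega), mul_zero]

theorem sum_range_mul_sub_succ_nonneg {n : ℕ} {X d : ℕ → ℝ}
    (hX : ∀ i, i + 1 < n → X i ≤ X (i + 1)) (hd : ∀ i ≤ n, 0 ≤ d i) (h0 : d 0 = 0)
    (hn : d n = 0) :
    0 ≤ ∑ i ∈ Finset.range n, X i * (d i - d (i + 1)) := by
  have hsum := Finset.sum_range_by_parts X (fun i => d i - d (i + 1)) n
  simp only [smul_eq_mul, Finset.sum_range_sub', h0, hn] at hsum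
  rw [hsum, sub_self, mul_zero, zero_sub, neg_nonneg]
  refine Finset.sum_nonpos fun i hi => mul_nonpos_of_nonneg_of_nonpos ?_ ?_
  · exact sub_nonneg.2 (hX i (by simp at hi; omega))
  · exact sub_nonpos.2 (hd (i + 1) (by simp at hi; omega))

theorem sum_mul_increment_le_of_le {n : ℕ} {x : Fin n → ℝ} (hx : Monotone x) {F G : ℝ → ℝ}
    (hFG : ∀ t ∈ Icc (0 : ℝ) 1, F t ≤ G t) (h0 : F 0 = G 0) (h1 : F 1 = G 1) :
    ∑ i : Fin n, x i * (G (((i : ℕ) + 1) / n) - G ((i : ℕ) / n))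
      ≤ ∑ i : Fin n, x i * (F (((i : ℕ) + 1) / n) - F ((i : ℕ) / n)) := by
  set d : ℕ → ℝ := fun k => G (k / n) - F (k / n) with hd
  set X : ℕ → ℝ := fun i => if h : i < n then x ⟨i, h⟩ else 0 with hX
  have hsum : ∑ i : Fin n, x i * (F (((i : ℕ) + 1) / n) - F ((i : ℕ) / n))
      - ∑ i : Fin n, x i * (G (((i : ℕ) + 1) / n) - G ((i : ℕ) / n))
      = ∑ i ∈ Finset.range n, X i * (d i - d (i + 1)) := by
    rw [← Finset.sum_sub_distrib, ← Fin.sum_univ_eq_sum_range (fun i => X i * (d i - d (i + 1)))]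
    refine Finset.sum_congr rfl fun i _ => ?_
    simp only [hX, hd, i.isLt, dite_true, Nat.cast_add_one]
    ring
  have hX_mono (i : ℕ) (hi : i + 1 < n) : X i ≤ X (i + 1) := by
    simp only [hX, hi, Nat.lt_of_succ_lt hi, dite_true]
    exact hx (Fin.mk_le_mk.2 i.le_succ)
  have hd_nonneg (k : ℕ) (hk : k ≤ n) : 0 ≤ d k :=
    sub_nonneg.2 (hFG _ ⟨by positivity, div_le_one_of_le₀ (by exact_mod_cast hk) n.cast_nonneg⟩)
  have hd_zero : d 0 = 0 := by simp [hd, h0]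
  have hd_n : d n = 0 := by
    rcases eq_or_ne n 0 with rfl | hn
    · exact hd_zero
    · simp [hd, div_self (Nat.cast_ne_zero.2 hn : (n : ℝ) ≠ 0), h1]
  linarith [sum_range_mul_sub_succ_nonneg hX_mono hd_nonneg hd_zero hd_n]

theorem stmt_11_general (n m j : ℕ) (hj : 1 ≤ j) (hjm : j ≤ m)
    (x : Fin n → ℝ) (hx : Monotone x) :
    Lest n x j (m + 1) ≤ Lest n x j m :=
  sum_mul_increment_le_of_le hx (fun _ ht => betaCDF_le_betaCDF_succ hj hjm ht)
    (by simp [betaCDF]) (betaCDF_succ_one hj hjm).symm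

/-- Antitonicity of the L-estimator in `m`: `μ̂_{j:m+1} ≤ μ̂_{j:m}` for `1 ≤ j ≤ m`. -/
theorem stmt_11 (n m j : ℕ) (hn : 1 ≤ n) (hj : 1 ≤ j) (hjm : j ≤ m)
    (x : Fin n → ℝ) (hx : Monotone x) :
    Lest n x j (m + 1) ≤ Lest n x j m :=
  stmt_11_general n m j hj hjm x hx
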